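/- For T > 0 and 0 < k < sqrt((1 − e^{−T})/(2Te)), the toy-model rate function Ĩ_T(k) = (1/2) inf_{f ∈ H₀¹}[ k²/∫₀ᵀ e^{−t+2f(t)}dt + ∫₀ᵀ ḟ(t)²dt ] satisfies the two-sided bound k²(e−1)/(2e(1−e^{−T})) ≤ Ĩ_T(k) ≤ k²/(1−e^{−T}). -/

import Mathlib

/-!
For an admissible path and any `c > 0`, AM-GM `f' ≤ c/2 + f'²/(2c)` gives
`f ≤ cT/2 + E/(2c)` on `[0, T]`, where `E = ∫₀ᵀ f'²`, hence
`∫₀ᵀ e^{-t+2f} ≤ e^{cT + E/c} (1 - e^{-T})`. Taking `c = C := k²/(1 - e^{-T})` and using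
`e^x ≥ 1 + x`, the energy is at least `C e^{-(CT + E/C)} + E ≥ C - C²T`, and the hypothesis on `k`
is `CTe < 1/2`, so `C - C²T ≥ C (1 - 1/e)`. The path `f ≡ 0` has energy exactly `C`.
-/

open MeasureTheory Real Set

theorem integral_exp_neg_eq_one_sub (T : ℝ) : ∫ t in (0:ℝ)..T, exp (-t) = 1 - exp (-T) := by
  simp [intervalIntegral.integral_comp_neg fun x => exp x, integral_exp]

theorem integral_le_of_sq_intervalIntegrable {g : ℝ → ℝ} {c t T : ℝ} (hc : 0 < c) (ht₀ : 0 ≤ t)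
    (htT : t ≤ T) (hg : IntervalIntegrable g volume 0 T)
    (hg₂ : IntervalIntegrable (fun s => g s ^ 2) volume 0 T) :
    ∫ s in (0:ℝ)..t, g s ≤ c * T / 2 + (∫ s in (0:ℝ)..T, g s ^ 2) / (2 * c) := by
  have hsub : uIcc 0 t ⊆ uIcc 0 T :=
    uIcc_subset_uIcc_left (by simp [uIcc_of_le (ht₀.trans htT), ht₀, htT])
  have hg₂t := hg₂.mono_set hsub
  calc ∫ s in (0:ℝ)..t, g s ≤ ∫ s in (0:ℝ)..t, (c / 2 + g s ^ 2 / (2 * c)) := by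
        refine intervalIntegral.integral_mono_on ht₀ (hg.mono_set hsub)
          (intervalIntegrable_const.add (hg₂t.div_const _)) fun s _ => ?_
        have hsq : c / 2 + g s ^ 2 / (2 * c) - g s = (c - g s) ^ 2 / (2 * c) := by
          field_simp; ring
        rw [← sub_nonneg, hsq]
        positivity
    _ = c * t / 2 + (∫ s in (0:ℝ)..t, g s ^ 2) / (2 * c) := by
        rw [intervalIntegral.integral_add intervalIntegrable_const (hg₂t.div_const _),
          intervalIntegral.integral_const, intervalIntegral.integral_div]
        simp only [sub_zero, smul_eq_mul, add_left_inj]; ring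
    _ ≤ c * T / 2 + (∫ s in (0:ℝ)..T, g s ^ 2) / (2 * c) := by
        gcongr
        exact intervalIntegral.integral_mono_interval le_rfl ht₀ htT
          (.of_forall fun s => sq_nonneg _) hg₂

theorem ContinuousOn.of_eq_primitive {f g : ℝ → ℝ} {T : ℝ} (hT : 0 ≤ T)
    (hg : IntervalIntegrable g volume 0 T) (hf : ∀ t ∈ Icc 0 T, f t = ∫ s in (0:ℝ)..t, g s) :
    ContinuousOn f (Icc 0 T) := by
  have := intervalIntegral.continuousOn_primitive_interval' hg left_mem_uIcc
  rw [uIcc_of_le hT] at this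
  exact this.congr hf

theorem intervalIntegrable_exp_neg_add_two_mul {f : ℝ → ℝ} {T : ℝ} (hT : 0 ≤ T)
    (hf : ContinuousOn f (Icc 0 T)) :
    IntervalIntegrable (fun t => exp (-t + 2 * f t)) volume 0 T := by
  apply ContinuousOn.intervalIntegrable
  rw [uIcc_of_le hT]
  fun_prop

theorem integral_exp_neg_add_two_mul_le {f : ℝ → ℝ} {a T : ℝ} (hT : 0 ≤ T)
    (hf : ContinuousOn f (Icc 0 T)) (hfa : ∀ t ∈ Icc 0 T, f t ≤ a) :
    ∫ t in (0:ℝ)..T, exp (-t + 2 * f t) ≤ exp (2 * a) * (1 - exp (-T)) :=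
  calc ∫ t in (0:ℝ)..T, exp (-t + 2 * f t) ≤ ∫ t in (0:ℝ)..T, exp (2 * a) * exp (-t) := by
        refine intervalIntegral.integral_mono_on hT (intervalIntegrable_exp_neg_add_two_mul hT hf)
          ((by fun_prop : Continuous _).intervalIntegrable _ _) fun t ht => ?_
        rw [← exp_add]
        exact exp_le_exp.mpr (by linarith [hfa t ht])
    _ = exp (2 * a) * (1 - exp (-T)) := by
        rw [intervalIntegral.integral_const_mul, integral_exp_neg_eq_one_sub]

theorem sub_sq_mul_le_mul_exp_neg_add {C E : ℝ} (T : ℝ) (hC : 0 < C) :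
    C - C ^ 2 * T ≤ C * exp (-(C * T + E / C)) + E := by
  have hexp := mul_le_mul_of_nonneg_left (add_one_le_exp (-(C * T + E / C))) hC.le
  have hlin : C * (-(C * T + E / C) + 1) = C - C ^ 2 * T - E := by field_simp; ring
  linarith

noncomputable def toyEnergy (T k : ℝ) (f f' : ℝ → ℝ) : ℝ :=
  k ^ 2 / (∫ t in (0:ℝ)..T, exp (-t + 2 * f t)) + ∫ t in (0:ℝ)..T, f' t ^ 2

/-- `Ĩ_T(k) = sInf (toyRateSet T k) / 2`; a Cameron–Martin path `f` is paired with `f' = ḟ`. -/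
def toyRateSet (T k : ℝ) : Set ℝ :=
  {v | ∃ f f' : ℝ → ℝ, f 0 = 0 ∧ (∀ t ∈ Icc (0:ℝ) T, f t = ∫ s in (0:ℝ)..t, f' s) ∧
    IntervalIntegrable f' volume 0 T ∧ IntervalIntegrable (fun s => f' s ^ 2) volume 0 T ∧
    v = toyEnergy T k f f'}

theorem toyEnergy_zero (T k : ℝ) : toyEnergy T k 0 0 = k ^ 2 / (1 - exp (-T)) := by
  simp [toyEnergy]

theorem div_one_sub_exp_neg_mem_toyRateSet (T k : ℝ) :
    k ^ 2 / (1 - exp (-T)) ∈ toyRateSet T k :=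
  ⟨0, 0, rfl, by simp, intervalIntegrable_const, by simp, (toyEnergy_zero T k).symm⟩

theorem one_sub_exp_neg_pos {T : ℝ} (hT : 0 < T) : 0 < 1 - exp (-T) :=
  sub_pos.mpr (exp_lt_one_iff.mpr (neg_lt_zero.mpr hT))

theorem sub_sq_mul_le_toyEnergy {T k : ℝ} {f f' : ℝ → ℝ} (hT : 0 < T) (hk : k ≠ 0)
    (hf : ∀ t ∈ Icc (0:ℝ) T, f t = ∫ s in (0:ℝ)..t, f' s)
    (hf' : IntervalIntegrable f' volume 0 T)
    (hf'₂ : IntervalIntegrable (fun s => f' s ^ 2) volume 0 T) :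
    k ^ 2 / (1 - exp (-T)) - (k ^ 2 / (1 - exp (-T))) ^ 2 * T ≤ toyEnergy T k f f' := by
  set D := 1 - exp (-T)
  set C := k ^ 2 / D
  set E := ∫ t in (0:ℝ)..T, f' t ^ 2
  have hD : 0 < D := one_sub_exp_neg_pos hT
  have hC : 0 < C := by positivity
  have hf_le : ∀ t ∈ Icc 0 T, f t ≤ C * T / 2 + E / (2 * C) := fun t ht =>
    hf t ht ▸ integral_le_of_sq_intervalIntegrable hC ht.1 ht.2 hf' hf'₂
  have hf_cont := ContinuousOn.of_eq_primitive hT.le hf' hf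
  have hI_pos : 0 < ∫ t in (0:ℝ)..T, exp (-t + 2 * f t) :=
    intervalIntegral.intervalIntegral_pos_of_pos_on
      (intervalIntegrable_exp_neg_add_two_mul hT.le hf_cont) (fun _ _ => exp_pos _) hT
  calc C - C ^ 2 * T ≤ C * exp (-(C * T + E / C)) + E := sub_sq_mul_le_mul_exp_neg_add T hC
    _ = k ^ 2 / (exp (2 * (C * T / 2 + E / (2 * C))) * D) + E := by
        have h2a : 2 * (C * T / 2 + E / (2 * C)) = C * T + E / C := by field_simp
        rw [h2a, exp_neg, mul_comm (exp _) D, ← div_div, ← div_eq_mul_inv]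
    _ ≤ toyEnergy T k f f' := by
        unfold toyEnergy
        gcongr
        exact integral_exp_neg_add_two_mul_le hT.le hf_cont hf_le

theorem toy_rate_two_sided_bound (T k : ℝ) (hT : 0 < T) (hk : 0 < k)
    (hk' : k < Real.sqrt ((1 - Real.exp (-T)) / (2 * T * Real.exp 1))) :
    k ^ 2 * (Real.exp 1 - 1) / (2 * Real.exp 1 * (1 - Real.exp (-T)))
        ≤ (1 / 2) * sInf {v : ℝ | ∃ f f' : ℝ → ℝ,
            f 0 = 0 ∧ (∀ t ∈ Set.Icc (0:ℝ) T, f t = ∫ s in (0:ℝ)..t, f' s) ∧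
            IntervalIntegrable f' volume 0 T ∧
            IntervalIntegrable (fun s => (f' s) ^ 2) volume 0 T ∧
            v = k ^ 2 / (∫ t in (0:ℝ)..T, Real.exp (-t + 2 * f t)) +
                  ∫ t in (0:ℝ)..T, (f' t) ^ 2} ∧
    (1 / 2) * sInf {v : ℝ | ∃ f f' : ℝ → ℝ,
            f 0 = 0 ∧ (∀ t ∈ Set.Icc (0:ℝ) T, f t = ∫ s in (0:ℝ)..t, f' s) ∧
            IntervalIntegrable f' volume 0 T ∧
            IntervalIntegrable (fun s => (f' s) ^ 2) volume 0 T ∧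
            v = k ^ 2 / (∫ t in (0:ℝ)..T, Real.exp (-t + 2 * f t)) +
                  ∫ t in (0:ℝ)..T, (f' t) ^ 2}
        ≤ k ^ 2 / (1 - Real.exp (-T)) := by
  change _ ≤ 1 / 2 * sInf (toyRateSet T k) ∧ 1 / 2 * sInf (toyRateSet T k) ≤ _
  have hD := one_sub_exp_neg_pos hT
  set C := k ^ 2 / (1 - exp (-T))
  have hCT : C * T * exp 1 < 1 / 2 := by
    have hk2 := (lt_sqrt hk.le).mp hk'
    rw [lt_div_iff₀ (by positivity)] at hk2
    rw [show C * T * exp 1 = k ^ 2 * (2 * T * exp 1) / (2 * (1 - exp (-T))) by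
      simp only [C]; field_simp, div_lt_iff₀ (by positivity)]
    linarith
  have hC : 0 < C := by positivity
  have hlower : C * (exp 1 - 1) / exp 1 ≤ C - C ^ 2 * T := by
    rw [div_le_iff₀ (exp_pos 1)]
    nlinarith [mul_lt_mul_of_pos_left hCT hC]
  have hlower_nonneg : 0 ≤ C * (exp 1 - 1) / exp 1 := by
    have : 0 ≤ exp 1 - 1 := by linarith [add_one_le_exp 1]
    positivity
  have hbound : ∀ v ∈ toyRateSet T k, C - C ^ 2 * T ≤ v := by
    rintro v ⟨f, f', -, hf, hf', hf'₂, rfl⟩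
    exact sub_sq_mul_le_toyEnergy hT hk.ne' hf hf' hf'₂
  have hmem := div_one_sub_exp_neg_mem_toyRateSet T k
  have hsInf_le : sInf (toyRateSet T k) ≤ C := csInf_le ⟨_, hbound⟩ hmem
  have hle_sInf : C - C ^ 2 * T ≤ sInf (toyRateSet T k) := le_csInf ⟨_, hmem⟩ hbound
  have hsplit : k ^ 2 * (exp 1 - 1) / (2 * exp 1 * (1 - exp (-T)))
      = 1 / 2 * (C * (exp 1 - 1) / exp 1) := by
    simp only [C]; field_simp
  constructor <;> linarith
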